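/- For a minimal generating set: if 𝒯'₀ is a minimal generating set for the E-closed set 𝒯₀, then every theory in 𝒯'₀ is isolated even within 𝒯₀: for each T ∈ 𝒯'₀ there is a sentence φ ∈ T with {T' ∈ 𝒯₀ : φ ∈ T'} = {T}. -/

import Mathlib

/-!
Let `T ∈ 𝒯'₀`. By minimality, `T` is not in the E-closure of `𝒯'₀ \ {T}`, so some `φ ∈ T`
lies in only finitely many theories of `𝒯'₀`. Conjoining `φ` with sentences separating `T`
from those finitely many theories isolates `T` within `𝒯'₀`. A sentence lying in only finitely
many members of `𝒯'₀` gains no new members on passing to `ClE 𝒯'₀ = 𝒯₀`.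
-/

open FirstOrder

/-- The E-closure of a family of theories: the family itself together with all
maximal (complete) theories each of whose sentences belongs to infinitely many
members of the family (Proposition 2.2 of the paper). -/
def ClE {L : Language} (𝒯 : Set L.Theory) : Set L.Theory :=
  𝒯 ∪ {T | T.IsMaximal ∧ ∀ φ ∈ T, {T' ∈ 𝒯 | φ ∈ T'}.Infinite}

theorem Set.sep_sdiff_singleton {α : Type*} (s : Set α) (a : α) (p : α → Prop) :
    {x ∈ s \ {a} | p x} = {x ∈ s | p x} \ {a} :=
  Set.ext fun _ => and_right_comm

namespace FirstOrder.Language.Theory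

variable {L : Language} {T T' : L.Theory}

theorem IsMaximal.not_mem_iff (h : T.IsMaximal) (φ : L.Sentence) : φ.not ∈ T ↔ φ ∉ T := by
  rw [h.mem_iff_models, h.mem_iff_models, h.isComplete.models_not_iff]

theorem IsMaximal.inf_mem_iff (h : T.IsMaximal) {φ ψ : L.Sentence} :
    φ ⊓ ψ ∈ T ↔ φ ∈ T ∧ ψ ∈ T := by
  simp only [h.mem_iff_models, models_sentence_iff, Sentence.realize_inf, forall_and]

theorem IsMaximal.top_mem (h : T.IsMaximal) : ⊤ ∈ T :=
  h.mem_of_models (models_sentence_iff.2 fun M => Sentence.realize_top M)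

theorem IsMaximal.exists_mem_not_mem_of_ne (h : T.IsMaximal) (h' : T'.IsMaximal) (hne : T ≠ T') :
    ∃ φ ∈ T, φ ∉ T' := by
  by_contra! hle
  refine hne (Set.Subset.antisymm hle fun φ hφ => ?_)
  by_contra hφT
  exact (h'.not_mem_iff φ).1 (hle _ ((h.not_mem_iff φ).2 hφT)) hφ

theorem IsMaximal.exists_mem_forall_not_mem (h : T.IsMaximal) {F : Set L.Theory}
    (hF : F.Finite) (hmax : ∀ T' ∈ F, T'.IsMaximal) (hT : T ∉ F) :
    ∃ φ ∈ T, ∀ T' ∈ F, φ ∉ T' := by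
  induction F, hF using Set.Finite.induction_on with
  | empty => exact ⟨⊤, h.top_mem, by simp⟩
  | @insert T₁ F _ _ ih =>
    obtain ⟨χ, hχT, hχ⟩ := ih (fun T' hT' => hmax T' (.inr hT')) (fun hTF => hT (.inr hTF))
    obtain ⟨ψ, hψT, hψ⟩ := h.exists_mem_not_mem_of_ne (hmax T₁ (.inl rfl)) fun hT₁ => hT (.inl hT₁)
    refine ⟨χ ⊓ ψ, h.inf_mem_iff.2 ⟨hχT, hψT⟩, ?_⟩
    rintro T' (rfl | hT') hmem
    · exact hψ ((hmax _ (.inl rfl)).inf_mem_iff.1 hmem).2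
    · exact hχ T' hT' ((hmax T' (.inr hT')).inf_mem_iff.1 hmem).1

theorem exists_sep_eq_singleton_of_finite {𝒯 : Set L.Theory} (hmax : ∀ T' ∈ 𝒯, T'.IsMaximal)
    (hT : T ∈ 𝒯) {φ : L.Sentence} (hφ : φ ∈ T) (hfin : {T' ∈ 𝒯 | φ ∈ T'}.Finite) :
    ∃ ψ ∈ T, {T' ∈ 𝒯 | ψ ∈ T'} = {T} := by
  have hT_max := hmax T hT
  obtain ⟨χ, hχT, hχ⟩ := hT_max.exists_mem_forall_not_mem (hfin.sdiff (t := {T}))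
    (fun T' hT' => hmax T' hT'.1.1) fun hT' => hT'.2 rfl
  refine ⟨φ ⊓ χ, hT_max.inf_mem_iff.2 ⟨hφ, hχT⟩, Set.ext fun T' => ⟨?_, ?_⟩⟩
  · rintro ⟨hT'𝒯, hmem⟩
    by_contra hne
    have ⟨hφT', hχT'⟩ := (hmax T' hT'𝒯).inf_mem_iff.1 hmem
    exact hχ T' ⟨⟨hT'𝒯, hφT'⟩, hne⟩ hχT'
  · rintro rfl
    exact ⟨hT, hT_max.inf_mem_iff.2 ⟨hφ, hχT⟩⟩

end FirstOrder.Language.Theory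

section ClE

variable {L : Language} {𝒮 𝒯 : Set L.Theory} {T : L.Theory}

theorem subset_ClE (𝒯 : Set L.Theory) : 𝒯 ⊆ ClE 𝒯 :=
  Set.subset_union_left

theorem ClE_mono (h : 𝒮 ⊆ 𝒯) : ClE 𝒮 ⊆ ClE 𝒯 :=
  Set.union_subset_union h fun _ ⟨hmax, hinf⟩ =>
    ⟨hmax, fun φ hφ => (hinf φ hφ).mono fun _ hT' => ⟨h hT'.1, hT'.2⟩⟩

theorem ClE_sdiff_singleton_of_mem (hT : T ∈ ClE (𝒯 \ {T})) : ClE (𝒯 \ {T}) = ClE 𝒯 := by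
  refine (ClE_mono Set.sdiff_subset).antisymm ?_
  rintro T' (hT' | ⟨hmax, hinf⟩)
  · by_cases hT'T : T' = T
    · exact hT'T ▸ hT
    · exact .inl ⟨hT', hT'T⟩
  · refine .inr ⟨hmax, fun φ hφ => ?_⟩
    rw [Set.sep_sdiff_singleton]
    exact (hinf φ hφ).sdiff (Set.finite_singleton T)

theorem exists_finite_of_not_mem_ClE (hT : T.IsMaximal) (hnot : T ∉ ClE 𝒯) :
    ∃ φ ∈ T, {T' ∈ 𝒯 | φ ∈ T'}.Finite := by
  by_contra! hinf
  exact hnot (.inr ⟨hT, hinf⟩)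

theorem sep_ClE_eq_of_finite {φ : L.Sentence} (hfin : {T' ∈ 𝒯 | φ ∈ T'}.Finite) :
    {T' ∈ ClE 𝒯 | φ ∈ T'} = {T' ∈ 𝒯 | φ ∈ T'} := by
  refine Set.Subset.antisymm ?_ fun T' hT' => ⟨subset_ClE 𝒯 hT'.1, hT'.2⟩
  rintro T' ⟨hT' | ⟨_, hinf⟩, hφ⟩
  · exact ⟨hT', hφ⟩
  · exact absurd hfin (hinf φ hφ)

end ClE

theorem minimal_generating_isolated_in_closure_general {L : Language}
    (𝒯₀ 𝒯'₀ : Set L.Theory)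
    (hcomp : ∀ T ∈ 𝒯₀, T.IsMaximal)
    (hgen : ClE 𝒯'₀ = 𝒯₀)
    (hmin : ∀ S ⊂ 𝒯'₀, ClE S ≠ 𝒯₀) :
    ∀ T ∈ 𝒯'₀, ∃ φ ∈ T, {T' ∈ 𝒯₀ | φ ∈ T'} = {T} := by
  intro T hT
  have hmax : ∀ T' ∈ 𝒯'₀, T'.IsMaximal := fun T' hT' => hcomp T' (hgen ▸ subset_ClE 𝒯'₀ hT')
  have hnot : T ∉ ClE (𝒯'₀ \ {T}) := fun hmem =>
    hmin _ (Set.sdiff_singleton_ssubset.2 hT) (by rw [ClE_sdiff_singleton_of_mem hmem, hgen])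
  obtain ⟨φ, hφT, hfin⟩ := exists_finite_of_not_mem_ClE (hmax T hT) hnot
  rw [Set.sep_sdiff_singleton] at hfin
  obtain ⟨ψ, hψT, hψ⟩ := Language.Theory.exists_sep_eq_singleton_of_finite hmax hT hφT
    (hfin.of_sdiff (Set.finite_singleton T))
  refine ⟨ψ, hψT, ?_⟩
  rw [← hgen, sep_ClE_eq_of_finite (hψ ▸ Set.finite_singleton T), hψ]

/-- Theorem 3.2, (2) ⇒ (4): theories of a minimal generating set are isolated
even within the whole E-closed set. -/
theorem minimal_generating_isolated_in_closure {L : Language}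
    (𝒯₀ 𝒯'₀ : Set L.Theory)
    (hcomp : ∀ T ∈ 𝒯₀, T.IsMaximal)
    (hclosed : ClE 𝒯₀ = 𝒯₀)
    (hsub : 𝒯'₀ ⊆ 𝒯₀)
    (hgen : ClE 𝒯'₀ = 𝒯₀)
    (hmin : ∀ S ⊂ 𝒯'₀, ClE S ≠ 𝒯₀) :
    ∀ T ∈ 𝒯'₀, ∃ φ ∈ T, {T' ∈ 𝒯₀ | φ ∈ T'} = {T} :=
  minimal_generating_isolated_in_closure_general 𝒯₀ 𝒯'₀ hcomp hgen hmin
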